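/- For every language L over a finite alphabet Σ, the downward closure of L (the set of subwords of words in L) is a regular language. -/

import Mathlib

/-!
The complement of a downward closure is closed under taking superwords. By Higman's lemma the
subword order on words over a finite alphabet is a well-quasi-order, so such a set has finitely
many minimal words and is the finite union of the sets of superwords of these. Each of those is
regular by Myhill–Nerode: a left quotient of the superwords of `w` is the set of superwords of a
suffix of `w`. Regular languages being closed under finite unions and complement, the downward
closure is regular.
-/

open List Set

theorem List.wellQuasiOrdered_sublist {α : Type*} [Finite α] :
    WellQuasiOrdered (fun l₁ l₂ : List α => l₁ <+ l₂) := by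
  have hα := partiallyWellOrderedOn_univ_iff.2 (Finite.wellQuasiOrdered (α := α) (· = ·))
  have h := partiallyWellOrderedOn_univ_iff.1 <| by
    simpa using hα.partiallyWellOrderedOn_sublistForall₂
  intro f
  obtain ⟨m, n, hmn, hf⟩ := h f
  obtain ⟨l, hl, hsub⟩ := sublistForall₂_iff.1 hf
  rw [forall₂_eq_eq_eq] at hl
  exact ⟨m, n, hmn, hl ▸ hsub⟩

namespace Language

variable {α : Type*}

def superwords (w : List α) : Language α := {v | w <+ v}

def downwardClosure (L : Language α) : Language α := {u | ∃ v ∈ L, u <+ v}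

@[simp]
theorem mem_superwords {w v : List α} : v ∈ superwords w ↔ w <+ v := Iff.rfl

@[simp]
theorem superwords_nil : superwords ([] : List α) = ⊤ :=
  Set.eq_univ_of_forall fun v => nil_sublist v

theorem exists_suffix_leftQuotient_superwords_singleton (w : List α) (a : α) :
    ∃ s, s <:+ w ∧ (superwords w).leftQuotient [a] = superwords s := by
  cases w with
  | nil => exact ⟨[], suffix_refl _, by ext v; exact iff_of_true (nil_sublist _) (nil_sublist _)⟩
  | cons b w =>
    by_cases hab : a = b
    · subst hab
      exact ⟨w, suffix_cons _ _, by ext v; simp⟩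
    · refine ⟨b :: w, suffix_refl _, ?_⟩
      ext v
      simp [sublist_cons_iff, Ne.symm hab]

theorem exists_suffix_leftQuotient_superwords (w u : List α) :
    ∃ s, s <:+ w ∧ (superwords w).leftQuotient u = superwords s := by
  induction u generalizing w with
  | nil => exact ⟨w, suffix_refl _, rfl⟩
  | cons a u ih =>
    obtain ⟨t, htw, ht⟩ := exists_suffix_leftQuotient_superwords_singleton w a
    obtain ⟨s, hst, hs⟩ := ih t
    refine ⟨s, hst.trans htw, ?_⟩
    rw [← singleton_append, leftQuotient_append, ht, hs]

theorem isRegular_superwords (w : List α) : (superwords w).IsRegular := by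
  refine IsRegular.of_finite_range_leftQuotient <|
    ((finite_toSet w.tails).image superwords).subset ?_
  rintro _ ⟨u, rfl⟩
  obtain ⟨s, hs, h⟩ := exists_suffix_leftQuotient_superwords w u
  exact ⟨s, (mem_tails s w).2 hs, h.symm⟩

theorem isRegular_bot : (⊥ : Language α).IsRegular := by
  simpa using (isRegular_superwords ([] : List α)).compl

theorem exists_sublist_minimal {U : Set (List α)} {u : List α} (hu : u ∈ U) :
    ∃ m ∈ U, m <+ u ∧ ∀ v ∈ U, v <+ m → v = m := by
  set S := {v ∈ U | v <+ u}
  have hS : S.Nonempty := ⟨u, hu, Sublist.refl u⟩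
  obtain ⟨hmU, hmu⟩ : Function.argminOn length S hS ∈ S := Function.argminOn_mem _ _ _
  refine ⟨_, hmU, hmu, fun v hvU hvm => hvm.eq_of_length ?_⟩
  have hshortest := Function.not_lt_argminOn length S (a := v) ⟨hvU, hvm.trans hmu⟩
  exact le_antisymm hvm.length_le (not_lt.1 hshortest)

theorem finite_setOf_minimal_sublist [Finite α] (U : Set (List α)) :
    {u ∈ U | ∀ v ∈ U, v <+ u → v = u}.Finite := by
  refine IsAntichain.finite_of_wellQuasiOrdered (r := (· <+ ·)) ?_ wellQuasiOrdered_sublist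
  intro u hu v hv huv h
  exact huv (hv.2 u hu.1 h)

theorem exists_finset_eq_sup_superwords [Finite α] {U : Language α}
    (hU : ∀ ⦃u v : List α⦄, u <+ v → u ∈ U → v ∈ U) :
    ∃ B : Finset (List α), U = B.sup superwords := by
  refine ⟨(finite_setOf_minimal_sublist U).toFinset, ?_⟩
  ext v
  simp only [Finset.sup_eq_iSup, mem_iSup, Finite.mem_toFinset, mem_superwords]
  constructor
  · intro hv
    obtain ⟨m, hmU, hmv, hm⟩ := exists_sublist_minimal hv
    exact ⟨m, ⟨hmU, hm⟩, hmv⟩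
  · rintro ⟨m, ⟨hmU, -⟩, hmv⟩
    exact hU hmv hmU

theorem isRegular_of_superword_closed [Finite α] {U : Language α}
    (hU : ∀ ⦃u v : List α⦄, u <+ v → u ∈ U → v ∈ U) : U.IsRegular := by
  obtain ⟨B, rfl⟩ := exists_finset_eq_sup_superwords hU
  exact Finset.sup_induction isRegular_bot (fun _ h₁ _ h₂ => h₁.add h₂)
    fun w _ => isRegular_superwords w

theorem isRegular_downwardClosure [Finite α] (L : Language α) :
    L.downwardClosure.IsRegular := by
  refine IsRegular.of_compl <| isRegular_of_superword_closed ?_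
  rintro u v huv hu ⟨w, hw, hvw⟩
  exact hu ⟨w, hw, huv.trans hvw⟩

end Language

/-- For every language `L` over a finite alphabet `A`, the downward closure
of `L` (the set of subwords of words in `L`) is regular. -/
theorem downward_closure_regular {A : Type} [Fintype A] (L : Language A) :
    ∃ (n : ℕ) (M : DFA A (Fin n)),
      M.accepts = {u : List A | ∃ v ∈ L, u.Sublist v} := by
  obtain ⟨σ, _, M, hM⟩ := L.isRegular_downwardClosure
  exact ⟨Fintype.card σ, M.reindex (Fintype.equivFin σ), by rw [DFA.accepts_reindex, hM]; rfl⟩
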